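/- arXiv:2602.06659 — 3 statements merged into one kernel-verified Lean document; each statement's English description precedes it below -/
import Mathlib

section
/- Let G be a graph, let I₀ be a maximum independent set of G, and let I₁ be an independent set of the induced subgraph G[V∖I₀]. Then the bipartite graph induced between I₀ and I₁ (with edge set the edges of G joining I₀ to I₁) admits a matching saturating I₁. -/
/-- A set of vertices is independent if no two of its vertices are adjacent. -/
def IsIndep {V : Type*} (G : SimpleGraph V) (s : Set V) : Prop :=
  ∀ u ∈ s, ∀ v ∈ s, ¬ G.Adj u v

/-!
By Hall's theorem it suffices that every subset `S` of `I₁` has at least `|S|` neighbours in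
`I₀`. Otherwise, removing those neighbours from `I₀` and adding `S` would give a larger
independent set.
-/

open Function

theorem Set.exists_injective_of_forall_ncard_le {α β : Type*} [Finite β] (r : α → β → Prop)
    {s : Set α} {t : Set β} (h : ∀ S ⊆ s, S.ncard ≤ {b ∈ t | ∃ a ∈ S, r a b}.ncard) :
    ∃ f : s → t, Injective f ∧ ∀ a : s, r a (f a) := by
  classical
  have := Fintype.ofFinite t
  refine (Fintype.all_card_le_filter_rel_iff_exists_injective fun (a : s) (b : t) ↦ r a b).mp
    fun A ↦ ?_
  have hS := h (Subtype.val '' (A : Set s)) (by simp)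
  rw [Set.ncard_image_of_injective _ Subtype.val_injective, Set.ncard_coe_finset] at hS
  convert hS using 1
  rw [← Set.ncard_coe_finset, ← Set.ncard_image_of_injective _ Subtype.val_injective]
  congr 1
  ext b
  simp [and_comm]

namespace IsIndep

variable {V : Type*} {G : SimpleGraph V} {s t : Set V}

theorem mono (ht : IsIndep G t) (hst : s ⊆ t) : IsIndep G s :=
  fun u hu v hv ↦ ht u (hst hu) v (hst hv)

theorem union (hs : IsIndep G s) (ht : IsIndep G t) (hst : ∀ u ∈ s, ∀ v ∈ t, ¬ G.Adj u v) :
    IsIndep G (s ∪ t) := by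
  rintro u (hu | hu) v (hv | hv)
  · exact hs u hu v hv
  · exact hst u hu v hv
  · exact fun h ↦ hst v hv u hu h.symm
  · exact ht u hu v hv

theorem ncard_le_ncard_neighbors_of_forall_ncard_le [Finite V] {I S : Set V} (hI : IsIndep G I)
    (hmax : ∀ J : Set V, IsIndep G J → J.ncard ≤ I.ncard) (hS : IsIndep G S)
    (hSI : Disjoint S I) : S.ncard ≤ {v ∈ I | ∃ x ∈ S, G.Adj x v}.ncard := by
  set N := {v ∈ I | ∃ x ∈ S, G.Adj x v}
  have hNI : N ⊆ I := Set.sep_subset _ _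
  have hJ : IsIndep G ((I \ N) ∪ S) :=
    (hI.mono Set.sdiff_subset).union hS fun u hu v hv hadj ↦ hu.2 ⟨hu.1, v, hv, hadj.symm⟩
  have hJcard := hmax _ hJ
  rw [Set.ncard_union_eq (hSI.symm.mono_left Set.sdiff_subset), Set.ncard_sdiff hNI] at hJcard
  have := Set.ncard_le_ncard hNI
  omega

end IsIndep

/-- Lemma 2.2: If `I₀` is a maximum independent set of `G` and `I₁` is an independent
set of the induced subgraph `G[V ∖ I₀]`, then the bipartite graph between `I₀` and `I₁`
admits a matching saturating `I₁` (given by an injective choice of `I₀`-neighbors). -/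
theorem stmt_0 {V : Type*} [Fintype V] (G : SimpleGraph V)
    (I₀ I₁ : Set V)
    (hI₀ : IsIndep G I₀)
    (hmax : ∀ J : Set V, IsIndep G J → J.ncard ≤ I₀.ncard)
    (hI₁sub : I₁ ⊆ I₀ᶜ)
    (hI₁ : IsIndep G I₁) :
    ∃ f : V → V, Set.InjOn f I₁ ∧ ∀ x ∈ I₁, f x ∈ I₀ ∧ G.Adj x (f x) := by
  classical
  obtain ⟨f, hf_inj, hf_adj⟩ := Set.exists_injective_of_forall_ncard_le G.Adj (s := I₁) (t := I₀)
    fun S hS ↦ hI₀.ncard_le_ncard_neighbors_of_forall_ncard_le hmax (hI₁.mono hS)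
      (Set.subset_compl_iff_disjoint_right.mp (hS.trans hI₁sub))
  refine ⟨fun v ↦ if h : v ∈ I₁ then f ⟨v, h⟩ else v, fun a ha b hb hab ↦ ?_, fun x hx ↦ ?_⟩
  · simp only [dif_pos ha, dif_pos hb] at hab
    exact congrArg Subtype.val (hf_inj (Subtype.ext hab))
  · simpa only [dif_pos hx] using ⟨(f ⟨x, hx⟩).2, hf_adj ⟨x, hx⟩⟩
end

section
/- Let G = (I₀ ∪ I₁, E) be a finite bipartite graph with parts I₀ and I₁ such that every vertex of I₁ has degree at least 3, and let d₁, d₂ be real numbers with 0 < d₁ < d₂. Then G admits an edge weighting w: E → {−d₁, 0, d₂} such that no two adjacent vertices have equal weighted degree. -/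
open Finset

/-- The weighted degree of a vertex: the sum of the weights of its incident edges. -/
def wdeg {V : Type*} [Fintype V] (G : SimpleGraph V) [DecidableRel G.Adj]
    (w : Sym2 V → ℝ) (v : V) : ℝ :=
  ∑ u ∈ G.neighborFinset v, w s(v, u)

/-- Lemma 2.3: a bipartite graph with parts `I₀`, `I₁` in which every vertex of `I₁`
has degree at least 3 admits a proper `{-d₁, 0, d₂}`-edge weighting, for any
`0 < d₁ < d₂`. -/
theorem stmt_3 {V : Type*} [Fintype V] (G : SimpleGraph V) [DecidableRel G.Adj]
    (I₀ I₁ : Set V)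
    (hdisj : Disjoint I₀ I₁) (hcover : I₀ ∪ I₁ = Set.univ)
    (hbip : ∀ u v, G.Adj u v → (u ∈ I₀ ∧ v ∈ I₁) ∨ (u ∈ I₁ ∧ v ∈ I₀))
    (hdeg : ∀ v ∈ I₁, 3 ≤ G.degree v)
    (d₁ d₂ : ℝ) (h₁ : 0 < d₁) (h₂ : d₁ < d₂) :
    ∃ w : Sym2 V → ℝ,
      (∀ e ∈ G.edgeSet, w e ∈ ({-d₁, 0, d₂} : Set ℝ)) ∧
      (∀ u v, G.Adj u v → wdeg G w u ≠ wdeg G w v) := by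
  classical
  have hd₂pos : 0 < d₂ := h₁.trans h₂
  -- update lemmas for `wdeg`
  have key_other : ∀ (w : Sym2 V → ℝ) (a b : V) (val : ℝ) (x : V), x ≠ a → x ≠ b →
      wdeg G (Function.update w s(a, b) val) x = wdeg G w x := by
    intro w a b val x hxa hxb
    unfold wdeg
    refine Finset.sum_congr rfl fun y _ => ?_
    refine Function.update_of_ne (fun h => ?_) _ _
    rcases Sym2.eq_iff.mp h with ⟨h1, _⟩ | ⟨h1, _⟩
    · exact hxa h1
    · exact hxb h1
  have key_self : ∀ (w : Sym2 V → ℝ) (a b : V) (val : ℝ), G.Adj a b →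
      wdeg G (Function.update w s(a, b) val) b = wdeg G w b - w s(a, b) + val := by
    intro w a b val hadj
    have hmem : a ∈ G.neighborFinset b := by
      rw [SimpleGraph.mem_neighborFinset]; exact hadj.symm
    have hne : b ≠ a := hadj.symm.ne
    unfold wdeg
    rw [← Finset.sum_erase_add _ _ hmem,
        ← Finset.sum_erase_add _ (fun u => w s(b, u)) hmem]
    have hsums : ∑ y ∈ (G.neighborFinset b).erase a,
        Function.update w s(a, b) val s(b, y)
        = ∑ y ∈ (G.neighborFinset b).erase a, w s(b, y) := by
      refine Finset.sum_congr rfl fun y hy => ?_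
      have hya : y ≠ a := Finset.ne_of_mem_erase hy
      refine Function.update_of_ne (fun h => ?_) _ _
      rcases Sym2.eq_iff.mp h with ⟨hb, _⟩ | ⟨_, hb⟩
      · exact hne hb
      · exact hya hb
    have hswap : (s(b, a) : Sym2 V) = s(a, b) := Sym2.eq_swap
    rw [hsums, hswap, Function.update_self]
    ring
  -- main induction
  have main : ∀ P : Finset V, ↑P ⊆ I₁ →
      ∃ w : Sym2 V → ℝ,
        (∀ e, w e ∈ ({-d₁, 0, d₂} : Set ℝ)) ∧
        (∀ e, w e ≠ 0 → ∃ x, x ∈ P ∧ x ∈ e) ∧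
        (∀ u, u ∈ I₀ → wdeg G w u = 0 ∨ ∃ k : ℕ, wdeg G w u = k * d₂ - d₁) ∧
        (∀ v, v ∈ P → wdeg G w v = d₂ ∨ wdeg G w v = -(2 * d₁)) := by
    intro P
    induction P using Finset.induction_on with
    | empty =>
        intro _
        refine ⟨fun _ => 0, by simp, by simp, fun u _ => Or.inl ?_, by simp⟩
        simp [wdeg]
    | @insert v P hvP IH =>
        intro hsub
        have hvI₁ : v ∈ I₁ := hsub (by simp)
        have hPsub : ↑P ⊆ I₁ := fun x hx => hsub (by simp [hx])
        obtain ⟨w, hrange, hsupp, hI₀, hPvals⟩ := IH hPsub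
        have hI₀v : ∀ u, G.Adj v u → u ∈ I₀ := by
          intro u hadj
          rcases hbip v u hadj with ⟨hv0, _⟩ | ⟨_, hu0⟩
          · exact absurd hvI₁ (Set.disjoint_left.mp hdisj hv0)
          · exact hu0
        have hzero : ∀ u, G.Adj v u → w s(v, u) = 0 := by
          intro u hadj
          by_contra h
          obtain ⟨x, hxP, hxe⟩ := hsupp _ h
          rcases Sym2.mem_iff.mp hxe with rfl | rfl
          · exact hvP hxP
          · exact Set.disjoint_left.mp hdisj (hI₀v x hadj) (hPsub hxP)
        by_cases hex : ∃ u ∈ G.neighborFinset v, wdeg G w u ≠ 0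
        · -- lift case
          obtain ⟨u₀, hu₀mem, hu₀ne⟩ := hex
          have hadj₀ : G.Adj v u₀ := by
            rwa [SimpleGraph.mem_neighborFinset] at hu₀mem
          have hu₀I₀ : u₀ ∈ I₀ := hI₀v u₀ hadj₀
          obtain ⟨k, hk⟩ : ∃ k : ℕ, wdeg G w u₀ = k * d₂ - d₁ := by
            rcases hI₀ u₀ hu₀I₀ with h | h
            · exact absurd h hu₀ne
            · exact h
          have hvne : v ≠ u₀ := hadj₀.ne
          set w' := Function.update w s(v, u₀) d₂ with hw'
          have hval : ∀ y, y ≠ u₀ → w' s(v, y) = w s(v, y) := by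
            intro y hy
            refine Function.update_of_ne (fun h => ?_) _ _
            rcases Sym2.eq_iff.mp h with ⟨_, h2⟩ | ⟨h1, _⟩
            · exact hy h2
            · exact hvne h1
          have hwv : wdeg G w' v = d₂ := by
            unfold wdeg
            rw [Finset.sum_eq_single u₀]
            · rw [hw']; exact Function.update_self _ _ _
            · intro y hy hyne
              rw [hval y hyne]
              exact hzero y (by rwa [SimpleGraph.mem_neighborFinset] at hy)
            · intro habs; exact absurd hu₀mem habs
          have hwu₀ : wdeg G w' u₀ = (k : ℝ) * d₂ - d₁ + d₂ := by
            rw [hw', key_self w v u₀ d₂ hadj₀, hzero u₀ hadj₀, hk]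
            ring
          refine ⟨w', ?_, ?_, ?_, ?_⟩
          · intro e
            by_cases he : e = s(v, u₀)
            · rw [hw', he, Function.update_self]
              simp
            · rw [hw', Function.update_of_ne he]
              exact hrange e
          · intro e hne
            by_cases he : e = s(v, u₀)
            · exact ⟨v, Finset.mem_insert_self _ _, by rw [he]; exact Sym2.mem_mk_left _ _⟩
            · rw [hw', Function.update_of_ne he] at hne
              obtain ⟨x, hxP, hxe⟩ := hsupp e hne
              exact ⟨x, Finset.mem_insert_of_mem hxP, hxe⟩
          · intro u huI₀
            by_cases hu : u = u₀
            · subst hu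
              exact Or.inr ⟨k + 1, by rw [hwu₀]; push_cast; ring⟩
            · have hnev : u ≠ v := fun h => Set.disjoint_left.mp hdisj huI₀ (h ▸ hvI₁)
              rw [hw', key_other w v u₀ d₂ u hnev hu]
              exact hI₀ u huI₀
          · intro x hx
            rcases Finset.mem_insert.mp hx with rfl | hxP
            · exact Or.inl hwv
            · have hx1 : x ∈ I₁ := hPsub hxP
              have hnev : x ≠ v := fun h => hvP (h ▸ hxP)
              have hneu : x ≠ u₀ := fun h => Set.disjoint_left.mp hdisj (h ▸ hu₀I₀) hx1
              rw [hw', key_other w v u₀ d₂ x hnev hneu]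
              exact hPvals x hxP
        · -- all neighbours fresh: mark two with -d₁
          push_neg at hex
          have hdeg3 : 3 ≤ (G.neighborFinset v).card := hdeg v hvI₁
          have h1lt : 1 < (G.neighborFinset v).card := by omega
          obtain ⟨u₁, hu₁mem, u₂, hu₂mem, hne12⟩ := Finset.one_lt_card.mp h1lt
          have hadj₁ : G.Adj v u₁ := by rwa [SimpleGraph.mem_neighborFinset] at hu₁mem
          have hadj₂ : G.Adj v u₂ := by rwa [SimpleGraph.mem_neighborFinset] at hu₂mem
          have hvne₁ : v ≠ u₁ := hadj₁.ne
          have hvne₂ : v ≠ u₂ := hadj₂.ne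
          set w₁ := Function.update w s(v, u₁) (-d₁) with hw₁
          set w₂ := Function.update w₁ s(v, u₂) (-d₁) with hw₂
          have he12 : (s(v, u₁) : Sym2 V) ≠ s(v, u₂) := by
            intro h
            rcases Sym2.eq_iff.mp h with ⟨_, h2⟩ | ⟨h1, _⟩
            · exact hne12 h2
            · exact hvne₂ h1
          have hval : ∀ y, y ≠ u₁ → y ≠ u₂ → w₂ s(v, y) = w s(v, y) := by
            intro y hy1 hy2
            rw [hw₂, Function.update_of_ne, hw₁, Function.update_of_ne]
            · intro h
              rcases Sym2.eq_iff.mp h with ⟨_, h2⟩ | ⟨h1, _⟩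
              · exact hy1 h2
              · exact hvne₁ h1
            · intro h
              rcases Sym2.eq_iff.mp h with ⟨_, h2⟩ | ⟨h1, _⟩
              · exact hy2 h2
              · exact hvne₂ h1
          have hv1 : w₂ s(v, u₁) = -d₁ := by
            rw [hw₂, Function.update_of_ne he12, hw₁, Function.update_self]
          have hv2 : w₂ s(v, u₂) = -d₁ := by
            rw [hw₂, Function.update_self]
          have hwv : wdeg G w₂ v = -(2 * d₁) := by
            unfold wdeg
            have hsubpair : ({u₁, u₂} : Finset V) ⊆ G.neighborFinset v := by
              intro x hx
              rcases Finset.mem_insert.mp hx with rfl | hx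
              · exact hu₁mem
              · rw [Finset.mem_singleton.mp hx]; exact hu₂mem
            rw [← Finset.sum_subset hsubpair]
            · rw [Finset.sum_pair hne12, hv1, hv2]; ring
            · intro x hxmem hxpair
              have hx1 : x ≠ u₁ := fun h => hxpair (by simp [h])
              have hx2 : x ≠ u₂ := fun h => hxpair (by simp [h])
              rw [hval x hx1 hx2]
              exact hzero x (by rwa [SimpleGraph.mem_neighborFinset] at hxmem)
          have hwu₁ : wdeg G w₂ u₁ = -d₁ := by
            rw [hw₂, key_other w₁ v u₂ (-d₁) u₁ hvne₁.symm hne12,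
               hw₁, key_self w v u₁ (-d₁) hadj₁, hzero u₁ hadj₁,
               hex u₁ hu₁mem]
            ring
          have hwu₂ : wdeg G w₂ u₂ = -d₁ := by
            have hw₁u₂ : w₁ s(v, u₂) = 0 := by
              rw [hw₁, Function.update_of_ne he12.symm]
              · exact hzero u₂ hadj₂
            rw [hw₂, key_self w₁ v u₂ (-d₁) hadj₂, hw₁u₂,
               hw₁, key_other w v u₁ (-d₁) u₂ hvne₂.symm hne12.symm,
               hex u₂ hu₂mem]
            ring
          refine ⟨w₂, ?_, ?_, ?_, ?_⟩
          · intro e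
            by_cases he2 : e = s(v, u₂)
            · rw [hw₂, he2, Function.update_self]; simp
            · rw [hw₂, Function.update_of_ne he2]
              by_cases he1 : e = s(v, u₁)
              · rw [hw₁, he1, Function.update_self]; simp
              · rw [hw₁, Function.update_of_ne he1]; exact hrange e
          · intro e hne
            by_cases he2 : e = s(v, u₂)
            · exact ⟨v, Finset.mem_insert_self _ _, by rw [he2]; exact Sym2.mem_mk_left _ _⟩
            · rw [hw₂, Function.update_of_ne he2] at hne
              by_cases he1 : e = s(v, u₁)
              · exact ⟨v, Finset.mem_insert_self _ _, by rw [he1]; exact Sym2.mem_mk_left _ _⟩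
              · rw [hw₁, Function.update_of_ne he1] at hne
                obtain ⟨x, hxP, hxe⟩ := hsupp e hne
                exact ⟨x, Finset.mem_insert_of_mem hxP, hxe⟩
          · intro u huI₀
            by_cases hu1 : u = u₁
            · subst hu1
              exact Or.inr ⟨0, by rw [hwu₁]; push_cast; ring⟩
            · by_cases hu2 : u = u₂
              · subst hu2
                exact Or.inr ⟨0, by rw [hwu₂]; push_cast; ring⟩
              · have hnev : u ≠ v := fun h => Set.disjoint_left.mp hdisj huI₀ (h ▸ hvI₁)
                rw [hw₂, key_other w₁ v u₂ (-d₁) u hnev hu2,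
                   hw₁, key_other w v u₁ (-d₁) u hnev hu1]
                exact hI₀ u huI₀
          · intro x hx
            rcases Finset.mem_insert.mp hx with rfl | hxP
            · exact Or.inr hwv
            · have hx1 : x ∈ I₁ := hPsub hxP
              have hnev : x ≠ v := fun h => hvP (h ▸ hxP)
              have hneu₁ : x ≠ u₁ := fun h =>
                Set.disjoint_left.mp hdisj (h ▸ hI₀v u₁ hadj₁) hx1
              have hneu₂ : x ≠ u₂ := fun h =>
                Set.disjoint_left.mp hdisj (h ▸ hI₀v u₂ hadj₂) hx1
              rw [hw₂, key_other w₁ v u₂ (-d₁) x hnev hneu₂,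
                 hw₁, key_other w v u₁ (-d₁) x hnev hneu₁]
              exact hPvals x hxP
  -- assemble
  obtain ⟨w, hrange, hsupp, hI₀vals, hI₁vals⟩ :=
    main (Finset.univ.filter (fun x => x ∈ I₁)) (by intro x hx; simpa using hx)
  have hI₁vals' : ∀ v ∈ I₁, wdeg G w v = d₂ ∨ wdeg G w v = -(2 * d₁) := by
    intro v hv
    exact hI₁vals v (Finset.mem_filter.mpr ⟨Finset.mem_univ _, hv⟩)
  have sep : ∀ a b : ℝ, (a = 0 ∨ ∃ k : ℕ, a = k * d₂ - d₁) →
      (b = d₂ ∨ b = -(2 * d₁)) → a ≠ b := by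
    rintro a b ha hb hab
    rcases ha with ha | ⟨k, ha⟩ <;> rcases hb with hb | hb
    · linarith
    · linarith
    · rcases k with _ | _ | k
      · push_cast at ha; linarith
      · push_cast at ha; linarith
      · have hk : (0 : ℝ) ≤ (k : ℝ) * d₂ :=
          mul_nonneg (Nat.cast_nonneg k) hd₂pos.le
        push_cast at ha; linarith
    · have hk : (0 : ℝ) ≤ (k : ℝ) * d₂ :=
        mul_nonneg (Nat.cast_nonneg k) hd₂pos.le
      linarith
  refine ⟨w, fun e _ => hrange e, ?_⟩
  intro a b hadj
  rcases hbip a b hadj with ⟨ha0, hb1⟩ | ⟨ha1, hb0⟩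
  · exact sep _ _ (hI₀vals a ha0) (hI₁vals' b hb1)
  · exact fun h => sep _ _ (hI₀vals b hb0) (hI₁vals' a ha1) h.symm
end

section
/- Let G = (I₀ ∪ I₁, E) be a finite bipartite graph with parts I₀ and I₁ such that every vertex of I₁ has degree at least 3, and let d₁, d₂ be real numbers with 0 < d₁ < d₂. Then G admits an edge weighting w: E → {−d₁, 0, d₂} such that every vertex of I₁ has weighted degree in {−3d₁, d₂} and every vertex of I₀ has weighted degree in (−∞, d₂−d₁) ∖ {−3d₁}. -/
open Finset

/-- A bipartite graph with parts `I₀`, `I₁` in which every vertex of `I₁` has degree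
at least 3 admits a `{-d₁, 0, d₂}`-edge weighting under which every vertex of `I₁` has
weighted degree in `{-3d₁, d₂}` and every vertex of `I₀` has weighted degree in
`(-∞, d₂ - d₁) \ {-3d₁}`, for any `0 < d₁ < d₂`. -/
theorem stmt_4 {V : Type*} [Fintype V] (G : SimpleGraph V) [DecidableRel G.Adj]
    (I₀ I₁ : Set V)
    (hdisj : Disjoint I₀ I₁) (hcover : I₀ ∪ I₁ = Set.univ)
    (hbip : ∀ u v, G.Adj u v → (u ∈ I₀ ∧ v ∈ I₁) ∨ (u ∈ I₁ ∧ v ∈ I₀))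
    (hdeg : ∀ v ∈ I₁, 3 ≤ G.degree v)
    (d₁ d₂ : ℝ) (h₁ : 0 < d₁) (h₂ : d₁ < d₂) :
    ∃ w : Sym2 V → ℝ,
      (∀ e ∈ G.edgeSet, w e ∈ ({-d₁, 0, d₂} : Set ℝ)) ∧
      (∀ v ∈ I₁, wdeg G w v ∈ ({-3 * d₁, d₂} : Set ℝ)) ∧
      (∀ v ∈ I₀, wdeg G w v ∈ Set.Iio (d₂ - d₁) \ {-3 * d₁}) := by
  classical
  suffices h : ∀ s : Finset V, ↑s ⊆ I₁ →
      ∃ w : Sym2 V → ℝ,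
        (∀ e ∈ G.edgeSet, w e ∈ ({-d₁, 0, d₂} : Set ℝ)) ∧
        (∀ x u, G.Adj x u → x ∈ I₁ → x ∉ s → w s(x, u) = 0) ∧
        (∀ v ∈ s, wdeg G w v ∈ ({-3 * d₁, d₂} : Set ℝ)) ∧
        (∀ u ∈ I₀, wdeg G w u ∈ Set.Iio (d₂ - d₁) \ {-3 * d₁}) by
    obtain ⟨w, h1, _, h3, h4⟩ := h (Set.toFinite I₁).toFinset
      (by intro x hx; simpa using hx)
    exact ⟨w, h1, fun v hv => h3 v ((Set.Finite.mem_toFinset _).mpr hv), h4⟩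
  intro s
  induction s using Finset.induction_on with
  | empty =>
      intro _
      refine ⟨fun _ => 0, ?_, ?_, ?_, ?_⟩
      · intro e _
        right; left; rfl
      · intro _ _ _ _ _; rfl
      · intro v hv; exact absurd hv (Finset.notMem_empty v)
      · intro u _
        have h0 : wdeg G (fun _ => (0:ℝ)) u = 0 := by simp [wdeg]
        rw [h0]
        refine ⟨Set.mem_Iio.mpr (by linarith), ?_⟩
        simp only [Set.mem_singleton_iff]
        intro h; linarith
  | @insert v s' hv ih =>
      intro hsub
      have hvI₁ : v ∈ I₁ := hsub (by simp)
      have hs' : ↑s' ⊆ I₁ := fun x hx => hsub (by simp [hx])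
      obtain ⟨w', h1', h2', h3', h4'⟩ := ih hs'
      -- neighbors of v are in I₀
      have hNbr : ∀ u, G.Adj v u → u ∈ I₀ := by
        intro u hadj
        rcases hbip v u hadj with ⟨hv0, _⟩ | ⟨_, hu0⟩
        · exact absurd hvI₁ (Set.disjoint_left.mp hdisj hv0)
        · exact hu0
      have hvnI₀ : v ∉ I₀ := fun hc => Set.disjoint_left.mp hdisj hc hvI₁
      -- v's edges currently weigh 0
      have hzero : ∀ u, G.Adj v u → w' s(v, u) = 0 := fun u hadj =>
        h2' v u hadj hvI₁ hv
      have hwv0 : wdeg G w' v = 0 := by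
        refine Finset.sum_eq_zero fun u hu => ?_
        exact hzero u ((SimpleGraph.mem_neighborFinset G v u).mp hu)
      by_cases hA : ∃ u ∈ G.neighborFinset v, wdeg G w' u = -2 * d₁
      · -- Case A: some neighbor has value -2d₁; put d₂ on that edge
        obtain ⟨u₀, hu₀mem, hu₀val⟩ := hA
        have hadj₀ : G.Adj v u₀ := (SimpleGraph.mem_neighborFinset G v u₀).mp hu₀mem
        have hu₀I₀ : u₀ ∈ I₀ := hNbr u₀ hadj₀
        have hu₀ne : u₀ ≠ v := fun hc =>
          hvnI₀ (hc ▸ hu₀I₀)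
        set w : Sym2 V → ℝ := fun e => w' e + (if e = s(v, u₀) then d₂ else 0) with hw
        have expand : ∀ x, wdeg G w x =
            wdeg G w' x + ∑ u ∈ G.neighborFinset x, (if s(x, u) = s(v, u₀) then d₂ else 0) := by
          intro x
          simp [wdeg, hw, Finset.sum_add_distrib]
        refine ⟨w, ?_, ?_, ?_, ?_⟩
        · -- edge weights
          intro e he
          by_cases hc : e = s(v, u₀)
          · have hz : w' e = 0 := by rw [hc]; exact hzero u₀ hadj₀
            have hval : w e = d₂ := by simp [hw, hc, hzero u₀ hadj₀]
            rw [hval]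
            exact Or.inr (Or.inr rfl)
          · simp only [hw, if_neg hc, add_zero]
            exact h1' e he
        · -- untouched vertices' edges are zero
          intro x u hadj hxI₁ hxns
          have hxv : x ≠ v := fun hc => hxns (by rw [hc]; exact Finset.mem_insert_self v s')
          have hne : s(x, u) ≠ s(v, u₀) := by
            intro hc
            rcases Sym2.eq_iff.mp hc with ⟨hc1, _⟩ | ⟨hc1, _⟩
            · exact hxv hc1
            · exact Set.disjoint_left.mp hdisj (hc1 ▸ hu₀I₀) hxI₁
          simp only [hw, if_neg hne, add_zero]
          exact h2' x u hadj hxI₁ (fun hc => hxns (Finset.mem_insert_of_mem hc))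
        · -- I₁ vertices in insert v s'
          intro x hx
          rcases Finset.mem_insert.mp hx with rfl | hxs'
          · -- x = v : weighted degree is d₂
            have : wdeg G w x = d₂ := by
              rw [expand, hwv0, zero_add]
              have hcongr : ∀ u ∈ G.neighborFinset x,
                  (if s(x, u) = s(x, u₀) then d₂ else 0) = (if u = u₀ then d₂ else 0) := by
                intro u _
                congr 1
                exact propext Sym2.congr_right
              rw [Finset.sum_congr rfl hcongr, Finset.sum_ite_eq' (G.neighborFinset x) u₀
                (fun _ => d₂), if_pos hu₀mem]
            rw [this]; right; rfl
          · -- x in s' : unchanged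
            have hxI₁' : x ∈ I₁ := hs' hxs'
            have hxv : x ≠ v := fun hc => hv (hc ▸ hxs')
            have hsum0 : ∑ u ∈ G.neighborFinset x, (if s(x, u) = s(v, u₀) then d₂ else 0) = 0 := by
              refine Finset.sum_eq_zero fun u _ => ?_
              have hne : s(x, u) ≠ s(v, u₀) := by
                intro hc
                rcases Sym2.eq_iff.mp hc with ⟨hc1, _⟩ | ⟨hc1, _⟩
                · exact hxv hc1
                · exact Set.disjoint_left.mp hdisj (hc1 ▸ hu₀I₀) hxI₁'
              exact if_neg hne
            rw [expand, hsum0, add_zero]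
            exact h3' x hxs'
        · -- I₀ vertices
          intro u huI₀
          by_cases hc : u = u₀
          · subst hc
            have hsum : ∑ u' ∈ G.neighborFinset u, (if s(u, u') = s(v, u) then d₂ else 0) = d₂ := by
              have hcongr : ∀ u' ∈ G.neighborFinset u,
                  (if s(u, u') = s(v, u) then d₂ else 0) = (if u' = v then d₂ else 0) := by
                intro u' _
                congr 1
                rw [eq_iff_iff]
                constructor
                · intro hc
                  rcases Sym2.eq_iff.mp hc with ⟨hc1, _⟩ | ⟨_, hc2⟩
                  · exact absurd hc1 hu₀ne
                  · exact hc2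
                · rintro rfl
                  rw [Sym2.eq_swap]
              rw [Finset.sum_congr rfl hcongr, Finset.sum_ite_eq' (G.neighborFinset u) v
                (fun _ => d₂), if_pos ((SimpleGraph.mem_neighborFinset G u v).mpr hadj₀.symm)]
            rw [expand, hsum, hu₀val]
            refine ⟨Set.mem_Iio.mpr (by linarith), ?_⟩
            simp only [Set.mem_singleton_iff]
            intro h; linarith
          · have hsum0 : ∑ u' ∈ G.neighborFinset u, (if s(u, u') = s(v, u₀) then d₂ else 0) = 0 := by
              refine Finset.sum_eq_zero fun u' _ => ?_
              have hne : s(u, u') ≠ s(v, u₀) := by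
                intro hcc
                rcases Sym2.eq_iff.mp hcc with ⟨hc1, _⟩ | ⟨hc1, _⟩
                · exact hvnI₀ (hc1 ▸ huI₀)
                · exact hc hc1
              exact if_neg hne
            rw [expand, hsum0, add_zero]
            exact h4' u huI₀
      · -- Case B: no neighbor has value -2d₁; put -d₁ on three edges
        push_neg at hA
        have hdegv : 3 ≤ (G.neighborFinset v).card := hdeg v hvI₁
        obtain ⟨T, hT, hTcard⟩ := Finset.exists_subset_card_eq hdegv
        set w : Sym2 V → ℝ := fun e => w' e + (if ∃ u ∈ T, e = s(v, u) then -d₁ else 0) with hw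
        have expand : ∀ x, wdeg G w x =
            wdeg G w' x + ∑ u ∈ G.neighborFinset x,
              (if ∃ u' ∈ T, s(x, u) = s(v, u') then -d₁ else 0) := by
          intro x
          simp [wdeg, hw, Finset.sum_add_distrib]
        have hTI₀ : ∀ u ∈ T, u ∈ I₀ := fun u hu =>
          hNbr u ((SimpleGraph.mem_neighborFinset G v u).mp (hT hu))
        refine ⟨w, ?_, ?_, ?_, ?_⟩
        · -- edge weights
          intro e he
          by_cases hc : ∃ u ∈ T, e = s(v, u)
          · obtain ⟨u, huT, rfl⟩ := hc
            have hz : w' s(v, u) = 0 :=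
              hzero u ((SimpleGraph.mem_neighborFinset G v u).mp (hT huT))
            have : w s(v, u) = -d₁ := by
              simp only [hw, hz, zero_add, if_pos (⟨u, huT, rfl⟩ : ∃ u' ∈ T, s(v,u) = s(v,u'))]
            rw [this]; left; rfl
          · simp only [hw, if_neg hc, add_zero]
            exact h1' e he
        · -- untouched vertices' edges are zero
          intro x u hadj hxI₁ hxns
          have hxv : x ≠ v := fun hc => hxns (by rw [hc]; exact Finset.mem_insert_self v s')
          have hne : ¬ ∃ u' ∈ T, s(x, u) = s(v, u') := by
            rintro ⟨u', hu'T, hc⟩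
            rcases Sym2.eq_iff.mp hc with ⟨hc1, _⟩ | ⟨hc1, _⟩
            · exact hxv hc1
            · exact Set.disjoint_left.mp hdisj (hc1 ▸ hTI₀ u' hu'T) hxI₁
          simp only [hw, if_neg hne, add_zero]
          exact h2' x u hadj hxI₁ (fun hc => hxns (Finset.mem_insert_of_mem hc))
        · -- I₁ vertices
          intro x hx
          rcases Finset.mem_insert.mp hx with rfl | hxs'
          · -- x = v : weighted degree is -3d₁
            have hval : wdeg G w x = -3 * d₁ := by
              rw [expand, hwv0, zero_add]
              have hcongr : ∀ u ∈ G.neighborFinset x,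
                  (if ∃ u' ∈ T, s(x, u) = s(x, u') then -d₁ else 0)
                    = (if u ∈ T then -d₁ else 0) := by
                intro u _
                congr 1
                rw [eq_iff_iff]
                constructor
                · rintro ⟨u', hu'T, hc⟩
                  rcases Sym2.eq_iff.mp hc with ⟨_, hc2⟩ | ⟨hc1, hc2⟩
                  · exact hc2 ▸ hu'T
                  · exact (hc2.trans hc1) ▸ hu'T
                · intro huT; exact ⟨u, huT, rfl⟩
              rw [Finset.sum_congr rfl hcongr, ← Finset.sum_filter,
                Finset.filter_mem_eq_inter, Finset.inter_eq_right.mpr hT,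
                Finset.sum_const, hTcard]
              push_cast
              ring
            rw [hval]; left; rfl
          · have hxI₁' : x ∈ I₁ := hs' hxs'
            have hxv : x ≠ v := fun hc => hv (hc ▸ hxs')
            have hsum0 : ∑ u ∈ G.neighborFinset x,
                (if ∃ u' ∈ T, s(x, u) = s(v, u') then -d₁ else 0) = 0 := by
              refine Finset.sum_eq_zero fun u _ => ?_
              refine if_neg ?_
              rintro ⟨u', hu'T, hc⟩
              rcases Sym2.eq_iff.mp hc with ⟨hc1, _⟩ | ⟨hc1, _⟩
              · exact hxv hc1
              · exact Set.disjoint_left.mp hdisj (hc1 ▸ hTI₀ u' hu'T) hxI₁'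
            rw [expand, hsum0, add_zero]
            exact h3' x hxs'
        · -- I₀ vertices
          intro u huI₀
          have huv : u ≠ v := fun hc => hvnI₀ (hc ▸ huI₀)
          by_cases hc : u ∈ T
          · have hadj : G.Adj v u := (SimpleGraph.mem_neighborFinset G v u).mp (hT hc)
            have hsum : ∑ u' ∈ G.neighborFinset u,
                (if ∃ u'' ∈ T, s(u, u') = s(v, u'') then -d₁ else 0) = -d₁ := by
              have hcongr : ∀ u' ∈ G.neighborFinset u,
                  (if ∃ u'' ∈ T, s(u, u') = s(v, u'') then -d₁ else 0)
                    = (if u' = v then -d₁ else 0) := by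
                intro u' _
                congr 1
                rw [eq_iff_iff]
                constructor
                · rintro ⟨u'', hu''T, hcc⟩
                  rcases Sym2.eq_iff.mp hcc with ⟨hc1, _⟩ | ⟨_, hc2⟩
                  · exact absurd hc1 huv
                  · exact hc2
                · rintro rfl
                  exact ⟨u, hc, Sym2.eq_swap⟩
              rw [Finset.sum_congr rfl hcongr, Finset.sum_ite_eq' (G.neighborFinset u) v
                (fun _ => -d₁), if_pos ((SimpleGraph.mem_neighborFinset G u v).mpr hadj.symm)]
            obtain ⟨hlt, hne⟩ := h4' u huI₀
            have hneold : wdeg G w' u ≠ -2 * d₁ := hA u (hT hc)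
            rw [expand, hsum]
            have hlt' : wdeg G w' u < d₂ - d₁ := Set.mem_Iio.mp hlt
            refine ⟨Set.mem_Iio.mpr (by linarith), ?_⟩
            simp only [Set.mem_singleton_iff]
            intro h
            apply hneold
            linarith
          · have hsum0 : ∑ u' ∈ G.neighborFinset u,
                (if ∃ u'' ∈ T, s(u, u') = s(v, u'') then -d₁ else 0) = 0 := by
              refine Finset.sum_eq_zero fun u' _ => ?_
              refine if_neg ?_
              rintro ⟨u'', hu''T, hcc⟩
              rcases Sym2.eq_iff.mp hcc with ⟨hc1, _⟩ | ⟨hc1, _⟩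
              · exact huv hc1
              · exact hc (hc1 ▸ hu''T)
            rw [expand, hsum0, add_zero]
            exact h4' u huI₀
end
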